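/- For every m ≥ 1 there exists a constant C : ℕ such that for every L : ℕ, every nonempty finite set P of points of ℤ^m all of whose coordinates lie in [0, L], and every p0 ∈ P, there exists a finite set S of configurations in (Fin m → ℤ) × (Fin m → ℤ) with cardinality at most C·(L+1)^(3·m^2) such that every minimum-length solution trajectory for (P, p0) (a solution trajectory such that no solution trajectory for (P, p0) has strictly fewer configurations) has all of its configurations c t in S. In particular, an optimal trajectory can always be found inside a portion of the configuration space of size polynomial in L. -/

import Mathlib

/-!
A king walk in `ℤ^m` (consecutive points at sup-distance at most `1`) becomes a racetrack
trajectory by stopping at each of its points. The reflected base-`(L + 1)` (boustrophedon)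
enumeration of the cube `[0, L]^m` is a king walk; preceded by a straight walk from `p0` to the
origin and followed by one back to `p0`, it yields a solution with `k ≤ b = 6 (L + 1)^m`
configurations, so optimal solutions are at least this short. A trajectory starting at rest at
`p0` has, after `t` steps, speed at most `t` and displacement at most `t²` in every coordinate,
so every configuration of an optimal solution lies in a box of `(2b + 1)^(3m)` configurations.
-/

/-- A trajectory of `k` configurations in the racetrack model on `ℤ^m`. -/
def IsTrajectory (m k : ℕ) (c : Fin k → (Fin m → ℤ) × (Fin m → ℤ)) : Prop :=
  ∀ (t : ℕ) (h : t + 1 < k),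
    (c ⟨t + 1, h⟩).1 = (c ⟨t, by omega⟩).1 + (c ⟨t + 1, h⟩).2 ∧
    ∀ j : Fin m, |(c ⟨t + 1, h⟩).2 j - (c ⟨t, by omega⟩).2 j| ≤ 1

/-- A solution trajectory for `(P, p0)`: a trajectory of `k ≥ 1` configurations
starting and ending at `p0` with zero velocity, visiting every point of `P`. -/
def IsSolution (m : ℕ) (P : Finset (Fin m → ℤ)) (p0 : Fin m → ℤ)
    (k : ℕ) (c : Fin k → (Fin m → ℤ) × (Fin m → ℤ)) : Prop :=
  IsTrajectory m k c ∧ 1 ≤ k ∧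
  (∀ h : 0 < k,
    (c ⟨0, h⟩).1 = p0 ∧ (c ⟨0, h⟩).2 = 0 ∧
    (c ⟨k - 1, Nat.sub_lt h one_pos⟩).1 = p0 ∧
    (c ⟨k - 1, Nat.sub_lt h one_pos⟩).2 = 0) ∧
  (∀ q ∈ P, ∃ t : Fin k, (c t).1 = q)

namespace IsTrajectory

variable {m k : ℕ} {c : Fin k → (Fin m → ℤ) × (Fin m → ℤ)}

theorem abs_velocity_le (hc : IsTrajectory m k c) (h0 : ∀ h : 0 < k, (c ⟨0, h⟩).2 = 0)
    (t : Fin k) (j : Fin m) : |(c t).2 j| ≤ t := by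
  obtain ⟨t, ht⟩ := t
  induction t with
  | zero => simp [h0 ht]
  | succ t ih =>
    have hv := abs_le.1 (ih (by omega))
    have hstep := abs_le.1 ((hc t ht).2 j)
    push_cast at hv ⊢
    rw [abs_le]
    constructor <;> linarith

theorem abs_position_sub_le (hc : IsTrajectory m k c) {p0 : Fin m → ℤ}
    (h0 : ∀ h : 0 < k, (c ⟨0, h⟩).1 = p0 ∧ (c ⟨0, h⟩).2 = 0) (t : Fin k) (j : Fin m) :
    |(c t).1 j - p0 j| ≤ (t : ℤ) ^ 2 := by
  obtain ⟨t, ht⟩ := t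
  induction t with
  | zero => simp [(h0 ht).1]
  | succ t ih =>
    have hp := abs_le.1 (ih (by omega))
    have hv := abs_le.1 (hc.abs_velocity_le (fun h => (h0 h).2) ⟨t + 1, ht⟩ j)
    have hpos : (c ⟨t + 1, ht⟩).1 j = (c ⟨t, by omega⟩).1 j + (c ⟨t + 1, ht⟩).2 j :=
      congr_fun (hc t ht).1 j
    push_cast at hp hv ⊢
    rw [abs_le, hpos]
    constructor <;> nlinarith

end IsTrajectory

namespace Racetrack

variable {m : ℕ}

def IsKingWalk (r : ℕ → Fin m → ℤ) : Prop :=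
  ∀ i j, |r (i + 1) j - r i j| ≤ 1

/-- At time `2 * i` the car rests at `r i`; at time `2 * i + 1` it has just arrived at
`r (i + 1)`. -/
def stopAndGo (r : ℕ → Fin m → ℤ) (k : ℕ) : Fin k → (Fin m → ℤ) × (Fin m → ℤ) :=
  fun t => (r ((t + 1) / 2), r ((t + 1) / 2) - r (t / 2))

theorem isSolution_stopAndGo {r : ℕ → Fin m → ℤ} (hr : IsKingWalk r)
    {P : Finset (Fin m → ℤ)} {p0 : Fin m → ℤ} {N : ℕ} (h0 : r 0 = p0) (hN : r N = p0)
    (hP : ∀ q ∈ P, ∃ i ≤ N, r i = q) :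
    IsSolution m P p0 (2 * N + 1) (stopAndGo r (2 * N + 1)) := by
  refine ⟨fun t _ => ⟨by simp [stopAndGo], fun j => ?_⟩, by omega, fun _ => ?_,
    fun q hq => ?_⟩
  · obtain ⟨i, rfl | rfl⟩ := Nat.even_or_odd' t
    · have hstep := hr i j
      simp only [stopAndGo, Pi.sub_apply, show (2 * i + 1 + 1) / 2 = i + 1 by omega,
        show (2 * i + 1) / 2 = i by omega, show 2 * i / 2 = i by omega]
      simpa using hstep
    · have hstep := hr i j
      simp only [stopAndGo, Pi.sub_apply, show (2 * i + 1 + 1 + 1) / 2 = i + 1 by omega,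
        show (2 * i + 1 + 1) / 2 = i + 1 by omega, show (2 * i + 1) / 2 = i by omega]
      simpa [abs_sub_comm] using hstep
  · simp [stopAndGo, h0, hN, show (2 * N + 1) / 2 = N by omega]
  · obtain ⟨i, hi, rfl⟩ := hP q hq
    exact ⟨⟨2 * i, by omega⟩, by simp [stopAndGo, show (2 * i + 1) / 2 = i by omega]⟩

def straightWalk (a b : Fin m → ℤ) : ℕ → Fin m → ℤ :=
  fun i j => a j + max (-(i : ℤ)) (min (i : ℤ) (b j - a j))

theorem isKingWalk_straightWalk (a b : Fin m → ℤ) : IsKingWalk (straightWalk a b) := by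
  intro i j
  simp only [straightWalk]
  push_cast
  rw [abs_le]
  constructor <;> omega

@[simp]
theorem straightWalk_zero (a b : Fin m → ℤ) : straightWalk a b 0 = a := by
  ext j
  simp [straightWalk]

theorem straightWalk_of_abs_sub_le {a b : Fin m → ℤ} {n : ℕ} (h : ∀ j, |b j - a j| ≤ n) :
    straightWalk a b n = b := by
  ext j
  have := abs_le.1 (h j)
  simp only [straightWalk]
  omega

def walkAppend {α : Type*} (f : ℕ → α) (n : ℕ) (g : ℕ → α) : ℕ → α :=
  fun i => if i ≤ n then f i else g (i - n)

theorem walkAppend_of_le {α : Type*} (f : ℕ → α) (g : ℕ → α) {n i : ℕ} (h : i ≤ n) :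
    walkAppend f n g i = f i :=
  if_pos h

theorem walkAppend_add {α : Type*} {f g : ℕ → α} {n : ℕ} (hfg : f n = g 0) (i : ℕ) :
    walkAppend f n g (n + i) = g i := by
  rcases i.eq_zero_or_pos with rfl | hi
  · simpa [walkAppend] using hfg
  · simp [walkAppend, show ¬ n + i ≤ n by omega]

theorem IsKingWalk.walkAppend {f g : ℕ → Fin m → ℤ} (hf : IsKingWalk f) (hg : IsKingWalk g)
    {n : ℕ} (hfg : f n = g 0) : IsKingWalk (walkAppend f n g) := by
  intro i j
  rcases lt_or_ge i n with hi | hi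
  · rw [walkAppend_of_le _ _ hi, walkAppend_of_le _ _ hi.le]
    exact hf i j
  · obtain ⟨d, rfl⟩ := Nat.exists_eq_add_of_le hi
    rw [add_assoc, walkAppend_add hfg, walkAppend_add hfg]
    exact hg d j

noncomputable def cube (m L : ℕ) : Finset (Fin m → ℤ) :=
  Fintype.piFinset fun _ => Finset.Icc 0 (L : ℤ)

theorem mem_cube {L : ℕ} {q : Fin m → ℤ} :
    q ∈ cube m L ↔ ∀ j, 0 ≤ q j ∧ q j ≤ L := by
  simp [cube]

theorem card_cube (m L : ℕ) : (cube m L).card = (L + 1) ^ m := by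
  simp [cube]

theorem abs_sub_le_of_mem_cube {L : ℕ} {p q : Fin m → ℤ} (hp : p ∈ cube m L)
    (hq : q ∈ cube m L) (j : Fin m) : |q j - p j| ≤ L := by
  have := mem_cube.1 hp j
  have := mem_cube.1 hq j
  rw [abs_le]
  constructor <;> omega

/-- The digit `a % (L + 1)` of `a` in base `L + 1`, read backwards when `a / (L + 1)` is odd:
this boustrophedon reading changes by at most one when `a` is incremented. -/
def reflectedDigit (L a : ℕ) : ℕ :=
  if Even (a / (L + 1)) then a % (L + 1) else L - a % (L + 1)

theorem reflectedDigit_le (L a : ℕ) : reflectedDigit L a ≤ L := by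
  unfold reflectedDigit
  have := Nat.mod_lt a (Nat.add_one_pos L)
  split_ifs <;> omega

theorem mul_add_div_mod_of_lt {d q r : ℕ} (hr : r < d) :
    (d * q + r) / d = q ∧ (d * q + r) % d = r :=
  (Nat.div_mod_unique (by omega)).2 ⟨by ring, hr⟩

theorem abs_reflectedDigit_succ_sub (L a : ℕ) :
    |(reflectedDigit L (a + 1) : ℤ) - reflectedDigit L a| ≤ 1 := by
  obtain ⟨q, r, hr, rfl⟩ : ∃ q r, r < L + 1 ∧ a = (L + 1) * q + r :=
    ⟨a / (L + 1), a % (L + 1), Nat.mod_lt a (Nat.add_one_pos L),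
      (Nat.div_add_mod a (L + 1)).symm⟩
  obtain ⟨hdiv, hmod⟩ := mul_add_div_mod_of_lt (q := q) hr
  rcases Nat.lt_or_ge r L with hrL | hrL
  · obtain ⟨hdiv', hmod'⟩ := mul_add_div_mod_of_lt (q := q) (show r + 1 < L + 1 by omega)
    simp only [reflectedDigit, add_assoc, hdiv, hmod, hdiv', hmod']
    rw [abs_le]
    split_ifs <;> omega
  · -- the digit wraps from `L` to `0` while the parity of the quotient flips
    obtain ⟨hdiv', hmod'⟩ := mul_add_div_mod_of_lt (d := L + 1) (q := q + 1) (Nat.add_one_pos L)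
    rw [show (L + 1) * q + r + 1 = (L + 1) * (q + 1) + 0 by rw [mul_add]; omega]
    simp only [reflectedDigit, hdiv, hmod, hdiv', hmod', Nat.even_add_one]
    rw [abs_le]
    split_ifs <;> omega

theorem reflectedDigit_injective_of_div_eq {L a a' : ℕ} (hdiv : a / (L + 1) = a' / (L + 1))
    (h : reflectedDigit L a = reflectedDigit L a') : a = a' := by
  have ha := Nat.div_add_mod a (L + 1)
  have ha' := Nat.div_add_mod a' (L + 1)
  have hr := Nat.mod_lt a (Nat.add_one_pos L)
  have hr' := Nat.mod_lt a' (Nat.add_one_pos L)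
  unfold reflectedDigit at h
  rw [hdiv] at h ha
  split_ifs at h <;> omega

def grayCode (m L n : ℕ) : Fin m → ℤ :=
  fun j => reflectedDigit L (n / (L + 1) ^ (j : ℕ))

@[simp]
theorem grayCode_zero (m L : ℕ) : grayCode m L 0 = 0 := by
  ext j
  simp [grayCode, reflectedDigit]

theorem grayCode_mem_cube (m L n : ℕ) : grayCode m L n ∈ cube m L :=
  mem_cube.2 fun _ => ⟨Int.natCast_nonneg _, Int.ofNat_le.2 (reflectedDigit_le L _)⟩

theorem isKingWalk_grayCode (m L : ℕ) : IsKingWalk (grayCode m L) := by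
  intro n _
  simp only [grayCode, Nat.succ_div]
  split_ifs
  · exact abs_reflectedDigit_succ_sub L _
  · simp

theorem grayCode_injOn (m L : ℕ) :
    Set.InjOn (grayCode m L) (Finset.range ((L + 1) ^ m) : Set ℕ) := by
  intro n hn n' hn' h
  simp only [Finset.coe_range, Set.mem_Iio] at hn hn'
  have key : ∀ d j, j + d = m → n / (L + 1) ^ j = n' / (L + 1) ^ j := by
    intro d
    induction d with
    | zero =>
      intro j hj
      rw [add_zero] at hj
      subst hj
      rw [Nat.div_eq_of_lt hn, Nat.div_eq_of_lt hn']
    | succ d ih =>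
      intro j hj
      apply reflectedDigit_injective_of_div_eq
      · rw [Nat.div_div_eq_div_mul, Nat.div_div_eq_div_mul, ← pow_succ]
        exact ih (j + 1) (by omega)
      · have hj := congr_fun h ⟨j, by omega⟩
        simp only [grayCode] at hj
        exact_mod_cast hj
  simpa using key m 0 (zero_add m)

theorem exists_grayCode_eq {L : ℕ} {q : Fin m → ℤ} (hq : q ∈ cube m L) :
    ∃ n < (L + 1) ^ m, grayCode m L n = q := by
  have himage : (Finset.range ((L + 1) ^ m)).image (grayCode m L) = cube m L :=
    Finset.eq_of_subset_of_card_le (Finset.image_subset_iff.2 fun n _ => grayCode_mem_cube m L n)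
      (by rw [card_cube, Finset.card_image_of_injOn (grayCode_injOn m L), Finset.card_range])
  rw [← himage] at hq
  simpa using hq

def cubeTour (m L : ℕ) (p0 : Fin m → ℤ) : ℕ → Fin m → ℤ :=
  walkAppend (straightWalk p0 0) L
    (walkAppend (grayCode m L) ((L + 1) ^ m) (straightWalk (grayCode m L ((L + 1) ^ m)) p0))

@[simp]
theorem cubeTour_zero (m L : ℕ) (p0 : Fin m → ℤ) : cubeTour m L p0 0 = p0 := by
  simp [cubeTour, walkAppend]

theorem straightWalk_eq_grayCode_zero {L : ℕ} {p0 : Fin m → ℤ} (hp0 : p0 ∈ cube m L) :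
    straightWalk p0 0 L = grayCode m L 0 := by
  rw [grayCode_zero]
  exact straightWalk_of_abs_sub_le
    (abs_sub_le_of_mem_cube hp0 (by simpa using grayCode_mem_cube m L 0))

theorem isKingWalk_cubeTour {L : ℕ} {p0 : Fin m → ℤ} (hp0 : p0 ∈ cube m L) :
    IsKingWalk (cubeTour m L p0) :=
  (isKingWalk_straightWalk _ _).walkAppend
    ((isKingWalk_grayCode m L).walkAppend (isKingWalk_straightWalk _ _)
      (straightWalk_zero _ _).symm)
    (by rw [straightWalk_eq_grayCode_zero hp0, walkAppend_of_le _ _ (Nat.zero_le _)])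

theorem cubeTour_add_of_le {L : ℕ} {p0 : Fin m → ℤ} (hp0 : p0 ∈ cube m L) {n : ℕ}
    (hn : n ≤ (L + 1) ^ m) : cubeTour m L p0 (L + n) = grayCode m L n := by
  rw [cubeTour, walkAppend_add, walkAppend_of_le _ _ hn]
  rw [straightWalk_eq_grayCode_zero hp0, walkAppend_of_le _ _ (Nat.zero_le _)]

theorem cubeTour_end {L : ℕ} {p0 : Fin m → ℤ} (hp0 : p0 ∈ cube m L) :
    cubeTour m L p0 (L + ((L + 1) ^ m + L)) = p0 := by
  rw [cubeTour, walkAppend_add, walkAppend_add (straightWalk_zero _ _).symm]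
  · exact straightWalk_of_abs_sub_le (abs_sub_le_of_mem_cube (grayCode_mem_cube m L _) hp0)
  · rw [straightWalk_eq_grayCode_zero hp0, walkAppend_of_le _ _ (Nat.zero_le _)]

theorem exists_isSolution_length_le (hm : 1 ≤ m) {L : ℕ} {P : Finset (Fin m → ℤ)}
    (hP : P ⊆ cube m L) {p0 : Fin m → ℤ} (hp0 : p0 ∈ P) :
    ∃ k c, IsSolution m P p0 k c ∧ k ≤ 6 * (L + 1) ^ m := by
  have hp0' := hP hp0
  refine ⟨_, _, isSolution_stopAndGo (isKingWalk_cubeTour hp0')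
    (cubeTour_zero m L p0) (cubeTour_end hp0') fun q hq => ?_, ?_⟩
  · obtain ⟨n, hn, rfl⟩ := exists_grayCode_eq (hP hq)
    exact ⟨L + n, by omega, cubeTour_add_of_le hp0' hn.le⟩
  · have : L + 1 ≤ (L + 1) ^ m := Nat.le_self_pow (by omega) _
    omega

noncomputable def configBox (p0 : Fin m → ℤ) (b : ℕ) :
    Finset ((Fin m → ℤ) × (Fin m → ℤ)) :=
  Fintype.piFinset (fun j => Finset.Icc (p0 j - b ^ 2) (p0 j + b ^ 2)) ×ˢ
    Fintype.piFinset (fun _ => Finset.Icc (-b : ℤ) b)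

theorem card_configBox_le (p0 : Fin m → ℤ) (b : ℕ) :
    (configBox p0 b).card ≤ (2 * b + 1) ^ (3 * m) := by
  have hpos_card : ∀ j, (p0 j + (b : ℤ) ^ 2 + 1 - (p0 j - b ^ 2)).toNat = 2 * b ^ 2 + 1 :=
    fun j => by
      rw [show p0 j + (b : ℤ) ^ 2 + 1 - (p0 j - b ^ 2) = ((2 * b ^ 2 + 1 : ℕ) : ℤ) by
        push_cast; ring, Int.toNat_natCast]
  have hvel_card : ((b : ℤ) + 1 - -b).toNat = 2 * b + 1 := by omega
  simp only [configBox, Finset.card_product, Fintype.card_piFinset, Int.card_Icc, hpos_card,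
    hvel_card, Finset.prod_const, Finset.card_univ, Fintype.card_fin]
  calc (2 * b ^ 2 + 1) ^ m * (2 * b + 1) ^ m ≤ ((2 * b + 1) ^ 2) ^ m * (2 * b + 1) ^ m := by
        gcongr
        nlinarith
    _ = (2 * b + 1) ^ (3 * m) := by rw [← pow_mul, ← pow_add]; ring_nf

theorem mem_configBox_of_isTrajectory {k : ℕ} {c : Fin k → (Fin m → ℤ) × (Fin m → ℤ)}
    (hc : IsTrajectory m k c) {p0 : Fin m → ℤ}
    (h0 : ∀ h : 0 < k, (c ⟨0, h⟩).1 = p0 ∧ (c ⟨0, h⟩).2 = 0) {b : ℕ} (hk : k ≤ b)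
    (t : Fin k) : c t ∈ configBox p0 b := by
  have htb : (t : ℤ) ≤ b := by exact_mod_cast (t.2.trans_le hk).le
  have ht0 : (0 : ℤ) ≤ t := Int.natCast_nonneg _
  have htb2 : (t : ℤ) ^ 2 ≤ (b : ℤ) ^ 2 := by gcongr
  simp only [configBox, Finset.mem_product, Fintype.mem_piFinset, Finset.mem_Icc]
  refine ⟨fun j => ?_, fun j => ?_⟩
  · have := abs_le.1 (hc.abs_position_sub_le h0 t j)
    constructor <;> linarith
  · have := abs_le.1 (hc.abs_velocity_le (fun h => (h0 h).2) t j)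
    constructor <;> linarith

end Racetrack

open Racetrack in
/-- An optimal (minimum-length) solution trajectory lives in a portion of the
configuration space of cardinality polynomial in `L`, namely
`O((L+1)^(3m²))`. -/
theorem vtsp_bounded_configuration_graph (m : ℕ) (hm : 1 ≤ m) :
    ∃ C : ℕ, ∀ (L : ℕ) (P : Finset (Fin m → ℤ)), P.Nonempty →
      (∀ q ∈ P, ∀ j : Fin m, 0 ≤ q j ∧ q j ≤ (L : ℤ)) →
      ∀ p0 ∈ P, ∃ S : Finset ((Fin m → ℤ) × (Fin m → ℤ)),
        S.card ≤ C * (L + 1) ^ (3 * m ^ 2) ∧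
        ∀ (k : ℕ) (c : Fin k → (Fin m → ℤ) × (Fin m → ℤ)),
          IsSolution m P p0 k c →
          (∀ (k' : ℕ) (c' : Fin k' → (Fin m → ℤ) × (Fin m → ℤ)),
            IsSolution m P p0 k' c' → k ≤ k') →
          ∀ t : Fin k, c t ∈ S := by
  refine ⟨13 ^ (3 * m), fun L P _ hbox p0 hp0 => ?_⟩
  obtain ⟨k₀, c₀, hsol₀, hk₀⟩ :=
    exists_isSolution_length_le hm (fun q hq => mem_cube.2 (hbox q hq)) hp0
  refine ⟨configBox p0 (6 * (L + 1) ^ m), ?_, fun k c hsol hopt t => ?_⟩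
  · have : 1 ≤ (L + 1) ^ m := Nat.one_le_pow _ _ (Nat.add_one_pos L)
    calc (configBox p0 (6 * (L + 1) ^ m)).card
        ≤ (2 * (6 * (L + 1) ^ m) + 1) ^ (3 * m) := card_configBox_le _ _
      _ ≤ (13 * (L + 1) ^ m) ^ (3 * m) := Nat.pow_le_pow_left (by omega) _
      _ = 13 ^ (3 * m) * (L + 1) ^ (3 * m ^ 2) := by rw [mul_pow, ← pow_mul]; ring_nf
  · exact mem_configBox_of_isTrajectory hsol.1
      (fun h => ⟨(hsol.2.2.1 h).1, (hsol.2.2.1 h).2.1⟩) ((hopt _ _ hsol₀).trans hk₀) t
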